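/- For every i with 0 ≤ i ≤ n, the element b_i ∈ B is left regular: for all w ∈ B, if w b_i = 0 then w = 0. -/

import Mathlib

noncomputable section

inductive Gen (n : ℕ) : Type
  | a : Fin (n+1) → Gen n
  | b : Fin (n+1) → Gen n
  | c : Fin (n+1) → Gen n

variable (K : Type) [Field K] (n : ℕ)

/-- The tensor algebra `T(V)` on the span of the generators, i.e. the free algebra. -/
abbrev FA := FreeAlgebra K (Gen n)

/-- `a_i`, with the convention that out-of-range indices give `0`. -/
def ga (i : ℤ) : FA K n :=
  if h : 0 ≤ i ∧ i ≤ (n : ℤ) then FreeAlgebra.ι K (Gen.a ⟨i.toNat, by omega⟩) else 0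

def gb (i : ℤ) : FA K n :=
  if h : 0 ≤ i ∧ i ≤ (n : ℤ) then FreeAlgebra.ι K (Gen.b ⟨i.toNat, by omega⟩) else 0

def gc (i : ℤ) : FA K n :=
  if h : 0 ≤ i ∧ i ≤ (n : ℤ) then FreeAlgebra.ι K (Gen.c ⟨i.toNat, by omega⟩) else 0

/-- The set `R` of defining relations. -/
def rels : Set (FA K n) :=
  { x | x = ga K n n * gb K n n * gc K n n ∨ x = gc K n 0 * ga K n 0 ∨
      ∃ i : ℕ, i < n ∧
        (x = ga K n i * gb K n i * gc K n i + gc K n (i+1) * ga K n (i+1) * gb K n (i+1) ∨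
         x = gb K n (i+1) * gc K n (i+1) * ga K n (i+1) ∨
         x = gc K n i * gc K n (i+1) ∨
         x = gb K n (i+1) * ga K n i) }

/-- The relation whose ring-quotient is `B = T(V)/⟨R⟩`. -/
def BRel (x y : FA K n) : Prop := x ∈ rels K n ∧ y = 0

/-- The algebra `B = T(V)/⟨R⟩`. -/
abbrev B := RingQuot (BRel K n)

/-- The quotient map `π_B : T(V) → B`. -/
def πB : FA K n →ₐ[K] B K n := RingQuot.mkAlgHom K (BRel K n)

/-- The image of `a_i` in `B` (zero for out-of-range indices). -/
def aB (i : ℤ) : B K n := πB K n (ga K n i)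
def bB (i : ℤ) : B K n := πB K n (gb K n i)
def cB (i : ℤ) : B K n := πB K n (gc K n i)

/-- The left annihilator of `x`, as a left ideal of `B`. -/
def lann (x : B K n) : Ideal (B K n) where
  carrier := {w | w * x = 0}
  add_mem' := by
    intro a b ha hb
    simp only [Set.mem_setOf_eq, add_mul] at *
    rw [ha, hb, add_zero]
  zero_mem' := by simp
  smul_mem' := by
    intro c w hw
    simp only [Set.mem_setOf_eq, smul_eq_mul, mul_assoc] at *
    rw [hw, mul_zero]

end

/-!
Let `M` be the vector space with basis the words in the generators. A generator `g` acts on a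
word `w` by forming `g w` and applying at most one rewriting rule at its left end:
`a_j b_j c_j ↦ -c_{j+1} a_{j+1} b_{j+1}` for `j < n`, and `a_n b_n c_n`, `b_{j+1} a_j`,
`b_j c_j a_j` (`j ≥ 1`), `c_0 a_0`, `c_j c_{j+1}` all `↦ 0`. Checking the first letters of a word
shows that every relation acts as zero, so `B` acts on `M`. Each rule is an identity in `B`, so
the map `M → B` taking a word to its image intertwines the two actions, and every `x ∈ B` is the
image of `x • ∅`, where `∅` is the empty word.

Every left-hand side ends in some `a_j` or `c_j`, so appending `b_i` on the right commutes with
the action. Hence `x b_i = 0` gives `(x • ∅) b_i = x • b_i = 0`, so `x • ∅ = 0` and `x = 0`.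
-/

open FreeAlgebra Finsupp

noncomputable section

deriving instance DecidableEq for Gen

abbrev Word (n : ℕ) := List (Gen n)

variable {K : Type} [Field K] {n : ℕ}

lemma ga_eq {i : ℤ} {j : Fin (n+1)} (h : i = j) : ga K n i = ι K (.a j) := by
  have := j.isLt
  rw [ga, dif_pos (by omega)]
  simp [h]

lemma gb_eq {i : ℤ} {j : Fin (n+1)} (h : i = j) : gb K n i = ι K (.b j) := by
  have := j.isLt
  rw [gb, dif_pos (by omega)]
  simp [h]

lemma gc_eq {i : ℤ} {j : Fin (n+1)} (h : i = j) : gc K n i = ι K (.c j) := by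
  have := j.isLt
  rw [gc, dif_pos (by omega)]
  simp [h]

lemma a_b_c_last_mem_rels :
    ι K (.a (Fin.last n)) * ι K (.b (Fin.last n)) * ι K (.c (Fin.last n)) ∈ rels K n := by
  left
  rw [ga_eq (i := n) (j := Fin.last n) rfl, gb_eq (i := n) (j := Fin.last n) rfl,
    gc_eq (i := n) (j := Fin.last n) rfl]

lemma c_a_zero_mem_rels : ι K (.c 0) * ι K (.a (0 : Fin (n+1))) ∈ rels K n := by
  right; left
  rw [gc_eq (i := 0) (j := 0) rfl, ga_eq (i := 0) (j := 0) rfl]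

lemma a_b_c_add_mem_rels {j k : Fin (n+1)} (h : j.1 + 1 = k) :
    ι K (.a j) * ι K (.b j) * ι K (.c j) + ι K (.c k) * ι K (.a k) * ι K (.b k) ∈
      rels K n := by
  refine Or.inr (Or.inr ⟨j, by omega, Or.inl ?_⟩)
  rw [ga_eq rfl, gb_eq rfl, gc_eq rfl, ga_eq (j := k) (by omega), gb_eq (j := k) (by omega),
    gc_eq (j := k) (by omega)]

lemma b_c_a_mem_rels {j : Fin (n+1)} (h : 1 ≤ j.1) :
    ι K (.b j) * ι K (.c j) * ι K (.a j) ∈ rels K n := by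
  refine Or.inr (Or.inr ⟨j - 1, by omega, Or.inr (Or.inl ?_)⟩)
  rw [ga_eq (j := j) (by omega), gb_eq (j := j) (by omega), gc_eq (j := j) (by omega)]

lemma c_c_mem_rels {j k : Fin (n+1)} (h : j.1 + 1 = k) :
    ι K (.c j) * ι K (.c k) ∈ rels K n := by
  refine Or.inr (Or.inr ⟨j, by omega, Or.inr (Or.inr (Or.inl ?_))⟩)
  rw [gc_eq rfl, gc_eq (j := k) (by omega)]

lemma b_a_mem_rels {j k : Fin (n+1)} (h : j.1 + 1 = k) :
    ι K (.b k) * ι K (.a j) ∈ rels K n := by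
  refine Or.inr (Or.inr ⟨j, by omega, Or.inr (Or.inr (Or.inr ?_))⟩)
  rw [ga_eq rfl, gb_eq (j := k) (by omega)]

lemma πB_eq_zero_of_mem_rels {x : FA K n} (hx : x ∈ rels K n) : πB K n x = 0 :=
  (RingQuot.mkAlgHom_rel K (s := BRel K n) ⟨hx, rfl⟩).trans (map_zero _)

lemma πB_mul_eq_zero_of_mem_rels {x : FA K n} (hx : x ∈ rels K n) (y : FA K n) :
    πB K n (x * y) = 0 := by
  rw [map_mul, πB_eq_zero_of_mem_rels hx, zero_mul]

lemma πB_b_a {j k : Fin (n+1)} (h : j.1 + 1 = k) :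
    πB K n (ι K (.b k)) * πB K n (ι K (.a j)) = 0 := by
  rw [← map_mul, πB_eq_zero_of_mem_rels (b_a_mem_rels h)]

lemma πB_a_b_c_add {j k : Fin (n+1)} (h : j.1 + 1 = k) :
    πB K n (ι K (.a j)) * πB K n (ι K (.b j)) * πB K n (ι K (.c j)) +
      πB K n (ι K (.c k)) * πB K n (ι K (.a k)) * πB K n (ι K (.b k)) = 0 := by
  simpa only [map_add, map_mul] using πB_eq_zero_of_mem_rels (a_b_c_add_mem_rels (K := K) h)

lemma πB_a_b_c_a {j : Fin (n+1)} (h : j.1 < n) :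
    πB K n (ι K (.a j)) * πB K n (ι K (.b j)) * πB K n (ι K (.c j)) * πB K n (ι K (.a j)) =
      0 := by
  set k : Fin (n+1) := ⟨j + 1, by omega⟩
  set π : Gen n → B K n := fun g => πB K n (ι K g)
  calc π (.a j) * π (.b j) * π (.c j) * π (.a j)
      = (π (.a j) * π (.b j) * π (.c j) + π (.c k) * π (.a k) * π (.b k)) * π (.a j) -
          π (.c k) * π (.a k) * (π (.b k) * π (.a j)) := by noncomm_ring
    _ = 0 := by rw [πB_a_b_c_add rfl, πB_b_a rfl]; simp

section Action

variable (K)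

@[simp] def actA (j : Fin (n+1)) : Word n → Word n →₀ K
  | .b j₁ :: .c j₂ :: w =>
      if j = j₁ ∧ j = j₂ then
        if h : j.1 < n then
          -- `a_j b_j c_j a_j ↦ -c_{j+1} a_{j+1} b_{j+1} a_j`, which contains `b_{j+1} a_j`
          if w.head? = some (.a j) then 0
          else
            -single (.c ⟨j + 1, by omega⟩ :: .a ⟨j + 1, by omega⟩ :: .b ⟨j + 1, by omega⟩ :: w) 1
        else 0
      else single (.a j :: .b j₁ :: .c j₂ :: w) 1
  | w => single (.a j :: w) 1

@[simp] def actB (j : Fin (n+1)) : Word n → Word n →₀ K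
  | .a j₁ :: w => if j₁.1 + 1 = j then 0 else single (.b j :: .a j₁ :: w) 1
  | .c j₁ :: .a j₂ :: w =>
      if j = j₁ ∧ j = j₂ ∧ 1 ≤ j.1 then 0 else single (.b j :: .c j₁ :: .a j₂ :: w) 1
  | w => single (.b j :: w) 1

@[simp] def actC (j : Fin (n+1)) : Word n → Word n →₀ K
  | .a j₁ :: w => if j = 0 ∧ j₁ = 0 then 0 else single (.c j :: .a j₁ :: w) 1
  | .c j₁ :: w => if j.1 + 1 = j₁ then 0 else single (.c j :: .c j₁ :: w) 1
  | w => single (.c j :: w) 1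

def act : Gen n → Word n → Word n →₀ K
  | .a j => actA K j
  | .b j => actB K j
  | .c j => actC K j

def rep : FA K n →ₐ[K] Module.End K (Word n →₀ K) :=
  FreeAlgebra.lift K fun g => linearCombination K (act K g)

def word (w : Word n) : FA K n := (w.map (ι K)).prod

def ofWords : (Word n →₀ K) →ₗ[K] B K n := linearCombination K fun w => πB K n (word K w)

def appendB (i : Fin (n+1)) : (Word n →₀ K) →ₗ[K] (Word n →₀ K) :=
  lmapDomain K K (· ++ [Gen.b i])

end Action

@[simp] lemma rep_ι_single (g : Gen n) (w : Word n) (c : K) :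
    rep K (ι K g) (single w c) = c • act K g w := by
  simp [rep]

@[simp] lemma word_nil : word K ([] : Word n) = 1 := rfl

@[simp] lemma word_cons (g : Gen n) (w : Word n) : word K (g :: w) = ι K g * word K w := by
  simp [word]

@[simp] lemma ofWords_single (w : Word n) (c : K) :
    ofWords K (single w c) = c • πB K n (word K w) := by
  simp [ofWords]

@[simp] lemma appendB_single (i : Fin (n+1)) (w : Word n) (c : K) :
    appendB K i (single w c) = single (w ++ [.b i]) c := by
  simp [appendB]

lemma rep_b_a {j k : Fin (n+1)} (h : j.1 + 1 = k) : rep K (ι K (.b k) * ι K (.a j)) = 0 := by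
  refine Finsupp.basisSingleOne.ext fun w => ?_
  simp only [coe_basisSingleOne, map_mul, Module.End.mul_apply, rep_ι_single, one_smul]
  rcases w with _ | ⟨(j₁|j₁|j₁), _ | ⟨(j₂|j₂|j₂), w⟩⟩ <;> simp [act] <;>
    repeat' (split_ifs <;> try simp_all [act, Fin.ext_iff, -Fin.val_eq_zero_iff])
  all_goals omega

lemma rep_c_a_zero : rep K (ι K (.c 0) * ι K (.a (0 : Fin (n+1)))) = 0 := by
  refine Finsupp.basisSingleOne.ext fun w => ?_
  simp only [coe_basisSingleOne, map_mul, Module.End.mul_apply, rep_ι_single, one_smul]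
  rcases w with _ | ⟨(j₁|j₁|j₁), _ | ⟨(j₂|j₂|j₂), w⟩⟩ <;> simp [act]
  repeat' (split_ifs <;> try simp_all [act, Fin.ext_iff, -Fin.val_eq_zero_iff])
  all_goals omega

lemma rep_c_c {j k : Fin (n+1)} (h : j.1 + 1 = k) : rep K (ι K (.c j) * ι K (.c k)) = 0 := by
  refine Finsupp.basisSingleOne.ext fun w => ?_
  simp only [coe_basisSingleOne, map_mul, Module.End.mul_apply, rep_ι_single, one_smul]
  rcases w with _ | ⟨(j₁|j₁|j₁), _ | ⟨(j₂|j₂|j₂), w⟩⟩ <;> simp [act] <;>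
    repeat' (split_ifs <;> try simp_all [act, Fin.ext_iff, -Fin.val_eq_zero_iff])
  all_goals omega

lemma rep_b_c_a {j : Fin (n+1)} (h : 1 ≤ j.1) :
    rep K (ι K (.b j) * ι K (.c j) * ι K (.a j)) = 0 := by
  refine Finsupp.basisSingleOne.ext fun w => ?_
  simp only [coe_basisSingleOne, map_mul, Module.End.mul_apply, rep_ι_single, one_smul]
  rcases w with _ | ⟨(j₁|j₁|j₁), _ | ⟨(j₂|j₂|j₂), w⟩⟩ <;> simp [act] <;>
    repeat' (split_ifs <;> try simp_all [act, Fin.ext_iff, -Fin.val_eq_zero_iff])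

lemma rep_a_b_c_last :
    rep K (ι K (.a (Fin.last n)) * ι K (.b (Fin.last n)) * ι K (.c (Fin.last n))) = 0 := by
  refine Finsupp.basisSingleOne.ext fun w => ?_
  simp only [coe_basisSingleOne, map_mul, Module.End.mul_apply, rep_ι_single, one_smul]
  rcases w with _ | ⟨(j₁|j₁|j₁), _ | ⟨(j₂|j₂|j₂), w⟩⟩ <;> simp [act] <;>
    repeat' (split_ifs <;> try simp_all [act, Fin.ext_iff, -Fin.val_eq_zero_iff])

lemma rep_a_b_c_add {j k : Fin (n+1)} (h : j.1 + 1 = k) :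
    rep K (ι K (.a j) * ι K (.b j) * ι K (.c j) + ι K (.c k) * ι K (.a k) * ι K (.b k)) =
      0 := by
  refine Finsupp.basisSingleOne.ext fun w => ?_
  simp only [coe_basisSingleOne, map_add, map_mul, LinearMap.add_apply, Module.End.mul_apply,
    rep_ι_single, one_smul]
  rcases w with _ | ⟨(j₁|j₁|j₁), _ | ⟨(j₂|j₂|j₂), w⟩⟩ <;> simp [act] <;>
    repeat' (split_ifs <;> try simp_all [act, Fin.ext_iff, -Fin.val_eq_zero_iff])
  all_goals omega

lemma rep_eq_zero_of_mem_rels {x : FA K n} (hx : x ∈ rels K n) : rep K x = 0 := by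
  rcases hx with rfl | rfl | ⟨i, hi, rfl | rfl | rfl | rfl⟩
  · rw [ga_eq (i := n) (j := Fin.last n) rfl, gb_eq (i := n) (j := Fin.last n) rfl,
      gc_eq (i := n) (j := Fin.last n) rfl]
    exact rep_a_b_c_last
  · rw [gc_eq (i := 0) (j := 0) rfl, ga_eq (i := 0) (j := 0) rfl]
    exact rep_c_a_zero
  · rw [ga_eq (j := ⟨i, by omega⟩) rfl, gb_eq (j := ⟨i, by omega⟩) rfl,
      gc_eq (j := ⟨i, by omega⟩) rfl, ga_eq (j := ⟨i + 1, by omega⟩) (by simp),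
      gb_eq (j := ⟨i + 1, by omega⟩) (by simp), gc_eq (j := ⟨i + 1, by omega⟩) (by simp)]
    exact rep_a_b_c_add rfl
  · rw [ga_eq (j := ⟨i + 1, by omega⟩) (by simp), gb_eq (j := ⟨i + 1, by omega⟩) (by simp),
      gc_eq (j := ⟨i + 1, by omega⟩) (by simp)]
    exact rep_b_c_a (by simp)
  · rw [gc_eq (j := ⟨i, by omega⟩) rfl, gc_eq (j := ⟨i + 1, by omega⟩) (by simp)]
    exact rep_c_c rfl
  · rw [ga_eq (j := ⟨i, by omega⟩) rfl, gb_eq (j := ⟨i + 1, by omega⟩) (by simp)]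
    exact rep_b_a rfl

variable (K n) in
def repB : B K n →ₐ[K] Module.End K (Word n →₀ K) :=
  RingQuot.liftAlgHom K
    ⟨rep K, fun _ _ ⟨hx, hy⟩ => by rw [hy, map_zero, rep_eq_zero_of_mem_rels hx]⟩

lemma repB_πB (x : FA K n) : repB K n (πB K n x) = rep K x :=
  RingQuot.liftAlgHom_mkAlgHom_apply _ _ _ _

lemma ofWords_act (g : Gen n) (w : Word n) :
    ofWords K (act K g w) = πB K n (ι K g * word K w) := by
  rcases g with j | j | j <;> simp only [act]
  · fun_cases actA K j w
    case case1 j₁ j₂ w hj hlt hw =>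
      obtain ⟨rfl, rfl⟩ := hj
      obtain ⟨w, rfl⟩ := List.head?_eq_some_iff.mp hw
      simp [← mul_assoc, πB_a_b_c_a hlt]
    case case2 j₁ j₂ w hj hlt hw =>
      obtain ⟨rfl, rfl⟩ := hj
      simp only [map_neg, ofWords_single, one_smul, word_cons, map_mul]
      refine neg_eq_of_add_eq_zero_left ?_
      simp only [← mul_assoc, ← add_mul]
      rw [πB_a_b_c_add rfl, zero_mul]
    case case3 j₁ j₂ w hj hlt =>
      obtain ⟨rfl, rfl⟩ := hj
      obtain rfl : j = Fin.last n := Fin.ext (by simp; omega)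
      simp only [map_zero, word_cons, ← mul_assoc]
      exact (πB_mul_eq_zero_of_mem_rels a_b_c_last_mem_rels _).symm
    all_goals simp
  · fun_cases actB K j w
    case case1 j₁ w h =>
      simp only [map_zero, word_cons, ← mul_assoc]
      exact (πB_mul_eq_zero_of_mem_rels (b_a_mem_rels h) _).symm
    case case3 j₁ j₂ w h =>
      obtain ⟨rfl, rfl, h⟩ := h
      simp only [map_zero, word_cons, ← mul_assoc]
      exact (πB_mul_eq_zero_of_mem_rels (b_c_a_mem_rels h) _).symm
    all_goals simp
  · fun_cases actC K j w
    case case1 j₁ w h =>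
      obtain ⟨rfl, rfl⟩ := h
      simp only [map_zero, word_cons, ← mul_assoc]
      exact (πB_mul_eq_zero_of_mem_rels c_a_zero_mem_rels _).symm
    case case3 j₁ w h =>
      simp only [map_zero, word_cons, ← mul_assoc]
      exact (πB_mul_eq_zero_of_mem_rels (c_c_mem_rels h) _).symm
    all_goals simp

lemma ofWords_rep (x : FA K n) (v : Word n →₀ K) :
    ofWords K (rep K x v) = πB K n x * ofWords K v := by
  induction x using FreeAlgebra.induction generalizing v with
  | grade0 r => simp [Algebra.smul_def]
  | grade1 g =>
    induction v using Finsupp.induction_linear with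
    | zero => simp
    | add v v' hv hv' => simp only [map_add, hv, hv', mul_add]
    | single w c => simp [ofWords_act]
  | mul x y hx hy => rw [map_mul, Module.End.mul_apply, hx, hy, map_mul, mul_assoc]
  | add x y hx hy => rw [map_add, LinearMap.add_apply, map_add, hx, hy, map_add, add_mul]

lemma πB_eq_zero_of_rep_single_nil {x : FA K n} (h : rep K x (single [] 1) = 0) :
    πB K n x = 0 := by
  simpa [h] using (ofWords_rep (K := K) x (single [] 1)).symm

lemma act_append_b (g : Gen n) (w : Word n) (i : Fin (n+1)) :
    act K g (w ++ [.b i]) = appendB K i (act K g w) := by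
  rcases g with j | j | j <;> simp only [act]
  · rcases w with _ | ⟨(j₁|j₁|j₁), _ | ⟨(j₂|j₂|j₂), _ | ⟨g, w⟩⟩⟩ <;>
      simp <;> split_ifs <;> simp_all
  · rcases w with _ | ⟨(j₁|j₁|j₁), _ | ⟨(j₂|j₂|j₂), w⟩⟩ <;> simp <;> split_ifs <;> simp_all
  · rcases w with _ | ⟨(j₁|j₁|j₁), w⟩ <;> simp <;> split_ifs <;> simp_all

lemma appendB_injective (i : Fin (n+1)) : Function.Injective (appendB K i) :=
  mapDomain_injective (List.append_left_injective _)

lemma commute_rep_appendB (x : FA K n) (i : Fin (n+1)) : Commute (rep K x) (appendB K i) := by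
  induction x using FreeAlgebra.induction with
  | grade0 r => rw [AlgHom.commutes]; exact Algebra.commute_algebraMap_left r _
  | grade1 g =>
    refine Finsupp.lhom_ext fun w c => ?_
    simp [act_append_b]
  | mul x y hx hy => rw [map_mul]; exact hx.mul_left hy
  | add x y hx hy => rw [map_add]; exact hx.add_left hy

lemma rep_mul_b_single_nil (x : FA K n) (i : Fin (n+1)) :
    rep K (x * ι K (.b i)) (single [] 1) = appendB K i (rep K x (single [] 1)) := by
  have h := congrArg (· (single [] 1)) (commute_rep_appendB x i).eq
  simp only [Module.End.mul_apply, appendB_single, List.nil_append] at h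
  simp [h, act]

end

/-- for `0 ≤ i ≤ n`, the element `b_i ∈ B` is left regular. -/
theorem stmt_2 (K : Type) [Field K] (n : ℕ) (i : ℕ) (hi : i ≤ n) :
    ∀ w : B K n, w * bB K n i = 0 → w = 0 := by
  intro w hw
  obtain ⟨x, rfl⟩ := RingQuot.mkAlgHom_surjective K (BRel K n) w
  let b : Fin (n+1) := ⟨i, by omega⟩
  have hxb : πB K n (x * ι K (.b b)) = 0 := by
    rwa [map_mul, ← gb_eq (i := i) (j := b) rfl]
  refine πB_eq_zero_of_rep_single_nil (appendB_injective b ?_)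
  rw [← rep_mul_b_single_nil, ← repB_πB, hxb, map_zero, map_zero, LinearMap.zero_apply]
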